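/- arXiv:1605.03188 — 5 statements merged into one kernel-verified Lean document; each statement's English description precedes it below -/
import Mathlib

section
/- If $S_1$ and $S_2$ are positive semidefinite complex $n \times n$ matrices, then the matrix $I + S_1 S_2$ is invertible. -/
/-! Write `S₁ = Bᴴ B`. By Sylvester's determinant identity
`det (1 + Bᴴ B S₂) = det (1 + B S₂ Bᴴ)`, and `1 + B S₂ Bᴴ` is positive definite because
`B S₂ Bᴴ` is positive semidefinite. -/

open Matrix
open scoped ComplexOrder

namespace Matrix

variable {𝕜 n : Type*} [RCLike 𝕜] [Fintype n] [DecidableEq n]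

open scoped MatrixOrder in
lemma PosSemidef.exists_eq_conjTranspose_mul_self {A : Matrix n n 𝕜} (hA : A.PosSemidef) :
    ∃ B : Matrix n n 𝕜, A = Bᴴ * B :=
  CStarAlgebra.nonneg_iff_eq_star_mul_self.mp hA.nonneg

lemma PosSemidef.isUnit_one_add_mul {A S : Matrix n n 𝕜} (hA : A.PosSemidef)
    (hS : S.PosSemidef) : IsUnit (1 + A * S) := by
  obtain ⟨B, rfl⟩ := hA.exists_eq_conjTranspose_mul_self
  have hpos : (1 + B * S * Bᴴ).PosDef :=
    PosDef.one.add_posSemidef (hS.mul_mul_conjTranspose_same B)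
  rw [isUnit_iff_isUnit_det, Matrix.mul_assoc, det_one_add_mul_comm]
  exact hpos.det_pos.ne'.isUnit

end Matrix

theorem stmt_0 (n : ℕ) (S1 S2 : Matrix (Fin n) (Fin n) ℂ)
    (h1 : S1.PosSemidef) (h2 : S2.PosSemidef) :
    IsUnit (1 + S1 * S2) :=
  h1.isUnit_one_add_mul h2
end

section
/- Let $V$ be a finite-dimensional real inner product space and $N = 1 + \dim V$. Let $W$ be a finite-dimensional normed space, $q: W \to V$ continuous, and $\sigma: W^N \to V$ the continuous map $\sigma(w_1,\dots,w_N) = \sum_{j=1}^N q(w_j)$. Suppose a sequence $(r_n)$ in $V$ converges to $s \in V$, where each $r_n = \sigma(s_{n,1}, \dots, s_{n,N}) = \sum_{j=1}^N q(s_{n,j})$ with $s_{n,j} \in W$, and suppose $\|s_{n,j}\|^2 \leq C\|r_n\|$ for a constant $C$ and all $n, j$. Then $s$ lies in the image of $\sigma$, i.e., $s = \sum_{j=1}^N q(s_j)$ for some $s_j \in W$. -/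
theorem stmt_10 (V W : Type*)
    [NormedAddCommGroup V] [InnerProductSpace ℝ V] [FiniteDimensional ℝ V]
    [NormedAddCommGroup W] [NormedSpace ℝ W] [FiniteDimensional ℝ W]
    (q : W → V) (hq : Continuous q)
    (N : ℕ) (hN : N = 1 + Module.finrank ℝ V)
    (s : V) (r : ℕ → V) (sn : ℕ → Fin N → W)
    (hr : ∀ n, r n = ∑ j, q (sn n j))
    (hconv : Filter.Tendsto r Filter.atTop (nhds s))
    (C : ℝ) (hb : ∀ n j, ‖sn n j‖ ^ 2 ≤ C * ‖r n‖) :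
    ∃ t : Fin N → W, s = ∑ j, q (t j) := by
  obtain ⟨M, hM⟩ : BddAbove (Set.range fun n => ‖r n‖) := hconv.norm.bddAbove_range
  have hMn : ∀ n, ‖r n‖ ≤ M := fun n => hM ⟨n, rfl⟩
  have hM0 : 0 ≤ M := le_trans (norm_nonneg _) (hMn 0)
  have hbdd : Bornology.IsBounded (Set.range sn) := by
    refine isBounded_iff_forall_norm_le.mpr ⟨Real.sqrt (|C| * M), ?_⟩
    rintro x ⟨n, rfl⟩
    refine (pi_norm_le_iff_of_nonneg (Real.sqrt_nonneg _)).mpr fun j => ?_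
    rw [Real.le_sqrt (norm_nonneg _)]
    calc ‖sn n j‖ ^ 2 ≤ C * ‖r n‖ := hb n j
      _ ≤ |C| * ‖r n‖ := mul_le_mul_of_nonneg_right (le_abs_self C) (norm_nonneg _)
      _ ≤ |C| * M := mul_le_mul_of_nonneg_left (hMn n) (abs_nonneg C)
    exact mul_nonneg (abs_nonneg C) hM0
  obtain ⟨a, -, φ, hφ, ha⟩ := tendsto_subseq_of_bounded hbdd (fun n => Set.mem_range_self n)
  refine ⟨a, ?_⟩
  have hcont : Continuous fun w : Fin N → W => ∑ j, q (w j) :=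
    continuous_finset_sum _ fun j _ => hq.comp (continuous_apply j)
  have h1 : Filter.Tendsto (r ∘ φ) Filter.atTop (nhds (∑ j, q (a j))) := by
    have := hcont.continuousAt.tendsto.comp ha
    simpa [Function.comp_def, hr] using this
  exact tendsto_nhds_unique (hconv.comp hφ.tendsto_atTop) h1
end

section
/- Let $L(x) = A_0 + \sum_{j=1}^g A_j x_j$ be a linear pencil with $A_j \in \mathbb{C}^{d \times e}$, $d \geq e$, and suppose there exist $D \in \mathbb{C}^{e \times d}$ and an invertible $R \in \mathbb{C}^{e \times e}$ with $\mathrm{Re}(D A_0) = R^* R$ and $\mathrm{Re}(D A_j) = 0$ for $1 \leq j \leq g$. Then there exists $\varepsilon > 0$ such that for every $n$ and every tuple $X$ of Hermitian $n \times n$ matrices, $L(X)^* L(X) \succeq \varepsilon I$, where $L(X) = A_0 \otimes I_n + \sum_j A_j \otimes X_j$. In particular one may take $\varepsilon = \|R^{-1}\|^{-4} \|D\|^{-2}$. -/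
open Matrix
open scoped ComplexOrder Kronecker Matrix.Norms.L2Operator

/-!
Put `P = (D ⊗ I) L(X)`. Because the `Xⱼ` are Hermitian and `Re(D Aⱼ) = 0`,
`Re P = Re(D A₀) ⊗ I = (R ⊗ I)* (R ⊗ I)`, so for every vector `x`
`‖(R ⊗ I) x‖² = Re ⟪x, P x⟫ ≤ ‖x‖ ‖D‖ ‖L(X) x‖`,
while `‖x‖ ≤ ‖R⁻¹‖ ‖(R ⊗ I) x‖`. Together these give `‖x‖ ≤ ‖R⁻¹‖² ‖D‖ ‖L(X) x‖`, which is the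
claimed lower bound on `L(X)* L(X)`.
-/

open scoped InnerProductSpace

namespace Matrix

section Pencil

variable {R ι l m n p : Type*} [CommRing R] [Fintype ι] [DecidableEq p]

def pencilEval (A₀ : Matrix m n R) (A : ι → Matrix m n R) (X : ι → Matrix p p R) :
    Matrix (m × p) (n × p) R :=
  A₀ ⊗ₖ 1 + ∑ j, A j ⊗ₖ X j

lemma kronecker_one_mul_pencilEval [Fintype m] [Fintype p] (D : Matrix l m R)
    (A₀ : Matrix m n R) (A : ι → Matrix m n R) (X : ι → Matrix p p R) :
    (D ⊗ₖ (1 : Matrix p p R)) * pencilEval A₀ A X = pencilEval (D * A₀) (fun j => D * A j) X := by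
  simp only [pencilEval, Matrix.mul_add, Matrix.mul_sum, ← mul_kronecker_mul, Matrix.one_mul]

variable [StarRing R]

lemma conjTranspose_pencilEval (A₀ : Matrix m n R) (A : ι → Matrix m n R)
    {X : ι → Matrix p p R} (hX : ∀ j, (X j).IsHermitian) :
    (pencilEval A₀ A X)ᴴ = pencilEval A₀ᴴ (fun j => (A j)ᴴ) X := by
  simp only [pencilEval, conjTranspose_add, conjTranspose_sum, conjTranspose_kronecker,
    conjTranspose_one, fun j => (hX j).eq]

lemma smul_add_conjTranspose_pencilEval (c : R) (A₀ : Matrix n n R) (A : ι → Matrix n n R)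
    {X : ι → Matrix p p R} (hX : ∀ j, (X j).IsHermitian) :
    c • (pencilEval A₀ A X + (pencilEval A₀ A X)ᴴ) =
      pencilEval (c • (A₀ + A₀ᴴ)) (fun j => c • (A j + (A j)ᴴ)) X := by
  rw [conjTranspose_pencilEval A₀ A hX]
  simp only [pencilEval, smul_kronecker, add_kronecker, Finset.sum_add_distrib, Finset.smul_sum,
    smul_add]
  abel

end Pencil

variable {𝕜 : Type*} [RCLike 𝕜] {k m n p : Type*} [Fintype k] [Fintype m] [Fintype n] [Fintype p]
  [DecidableEq k] [DecidableEq n] [DecidableEq p]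

lemma norm_toEuclideanLin_le (A : Matrix m n 𝕜) (x : EuclideanSpace 𝕜 n) :
    ‖toEuclideanLin A x‖ ≤ ‖A‖ * ‖x‖ :=
  A.l2_opNorm_mulVec x

omit [DecidableEq n] [DecidableEq p] in
lemma _root_.EuclideanSpace.norm_sq_eq_sum_norm_sq_slice (x : EuclideanSpace 𝕜 (n × p)) :
    ‖x‖ ^ 2 = ∑ j, ‖(EuclideanSpace.equiv n 𝕜).symm fun i => x (i, j)‖ ^ 2 := by
  simp only [EuclideanSpace.norm_sq_eq, Fintype.sum_prod_type_right]
  rfl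

omit [Fintype m] in
lemma toEuclideanLin_kronecker_one_apply (A : Matrix m n 𝕜) (x : EuclideanSpace 𝕜 (n × p))
    (i : m) (j : p) :
    toEuclideanLin (A ⊗ₖ (1 : Matrix p p 𝕜)) x (i, j) =
      toEuclideanLin A ((EuclideanSpace.equiv n 𝕜).symm fun i' => x (i', j)) i := by
  simp [toLpLin_apply, mulVec, dotProduct, Fintype.sum_prod_type, one_apply]

lemma norm_toEuclideanLin_kronecker_one_le (A : Matrix m n 𝕜) (x : EuclideanSpace 𝕜 (n × p)) :
    ‖toEuclideanLin (A ⊗ₖ (1 : Matrix p p 𝕜)) x‖ ≤ ‖A‖ * ‖x‖ := by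
  refine le_of_sq_le_sq ?_ (by positivity)
  calc ‖toEuclideanLin (A ⊗ₖ (1 : Matrix p p 𝕜)) x‖ ^ 2
      = ∑ j, ‖toEuclideanLin A ((EuclideanSpace.equiv n 𝕜).symm fun i => x (i, j))‖ ^ 2 := by
        rw [EuclideanSpace.norm_sq_eq_sum_norm_sq_slice]
        simp only [toEuclideanLin_kronecker_one_apply]
        rfl
    _ ≤ ∑ j, (‖A‖ * ‖(EuclideanSpace.equiv n 𝕜).symm fun i => x (i, j)‖) ^ 2 :=
        Finset.sum_le_sum fun j _ =>
          pow_le_pow_left₀ (norm_nonneg _) (norm_toEuclideanLin_le A _) 2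
    _ = (‖A‖ * ‖x‖) ^ 2 := by
        rw [mul_pow, EuclideanSpace.norm_sq_eq_sum_norm_sq_slice x, Finset.mul_sum]
        simp only [mul_pow]

lemma l2_opNorm_kronecker_one_le (A : Matrix m n 𝕜) : ‖A ⊗ₖ (1 : Matrix p p 𝕜)‖ ≤ ‖A‖ :=
  ContinuousLinearMap.opNorm_le_bound _ (norm_nonneg A) (norm_toEuclideanLin_kronecker_one_le A)

lemma re_inner_toEuclideanLin_conjTranspose (P : Matrix n n 𝕜) (x : EuclideanSpace 𝕜 n) :
    RCLike.re ⟪x, toEuclideanLin Pᴴ x⟫_𝕜 = RCLike.re ⟪x, toEuclideanLin P x⟫_𝕜 := by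
  rw [toEuclideanLin_conjTranspose_eq_adjoint, LinearMap.adjoint_inner_right, inner_re_symm]

lemma re_inner_toEuclideanLin_half_add_conjTranspose (P : Matrix n n 𝕜)
    (x : EuclideanSpace 𝕜 n) :
    RCLike.re ⟪x, toEuclideanLin ((1 / 2 : 𝕜) • (P + Pᴴ)) x⟫_𝕜 =
      RCLike.re ⟪x, toEuclideanLin P x⟫_𝕜 := by
  have half : (1 / 2 : 𝕜) = ((1 / 2 : ℝ) : 𝕜) := by
    rw [RCLike.ofReal_div, RCLike.ofReal_one, RCLike.ofReal_ofNat]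
  rw [map_smul, map_add, LinearMap.smul_apply, LinearMap.add_apply, inner_smul_right,
    inner_add_right, half, RCLike.re_ofReal_mul, map_add, re_inner_toEuclideanLin_conjTranspose]
  ring

lemma inner_toEuclideanLin_conjTranspose_mul_self (S : Matrix k n 𝕜) (x : EuclideanSpace 𝕜 n) :
    ⟪x, toEuclideanLin (Sᴴ * S) x⟫_𝕜 = (‖toEuclideanLin S x‖ ^ 2 : 𝕜) := by
  rw [toLpLin_mul (q := 2), LinearMap.comp_apply, toEuclideanLin_conjTranspose_eq_adjoint,
    LinearMap.adjoint_inner_right, inner_self_eq_norm_sq_to_K]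

theorem norm_le_of_half_add_conjTranspose_eq_conjTranspose_mul_self [DecidableEq m]
    (L : Matrix m n 𝕜) (D : Matrix n m 𝕜) {S : Matrix k n 𝕜} {T : Matrix n k 𝕜}
    (hTS : T * S = 1) (hRe : (1 / 2 : 𝕜) • (D * L + (D * L)ᴴ) = Sᴴ * S)
    (x : EuclideanSpace 𝕜 n) :
    ‖x‖ ≤ ‖T‖ ^ 2 * ‖D‖ * ‖toEuclideanLin L x‖ := by
  have hS : ‖toEuclideanLin S x‖ ^ 2 =
      RCLike.re ⟪x, toEuclideanLin D (toEuclideanLin L x)⟫_𝕜 := by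
    rw [← LinearMap.comp_apply, ← toLpLin_mul, ← re_inner_toEuclideanLin_half_add_conjTranspose,
      hRe, inner_toEuclideanLin_conjTranspose_mul_self, ← RCLike.ofReal_pow, RCLike.ofReal_re]
  have hDL : RCLike.re ⟪x, toEuclideanLin D (toEuclideanLin L x)⟫_𝕜 ≤
      ‖x‖ * (‖D‖ * ‖toEuclideanLin L x‖) :=
    calc _ ≤ ‖⟪x, toEuclideanLin D (toEuclideanLin L x)⟫_𝕜‖ := RCLike.re_le_norm _
      _ ≤ ‖x‖ * ‖toEuclideanLin D (toEuclideanLin L x)‖ := norm_inner_le_norm _ _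
      _ ≤ _ := mul_le_mul_of_nonneg_left (norm_toEuclideanLin_le D _) (norm_nonneg x)
  have hT : ‖x‖ ≤ ‖T‖ * ‖toEuclideanLin S x‖ := by
    have hx : toEuclideanLin T (toEuclideanLin S x) = x := by
      rw [← LinearMap.comp_apply, ← toLpLin_mul, hTS, toLpLin_one, LinearMap.id_apply]
    calc ‖x‖ = ‖toEuclideanLin T (toEuclideanLin S x)‖ := by rw [hx]
      _ ≤ _ := norm_toEuclideanLin_le T _
  rcases (norm_nonneg x).eq_or_lt with hx0 | hx0
  · rw [← hx0]; positivity
  refine le_of_mul_le_mul_left ?_ hx0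
  calc ‖x‖ * ‖x‖ ≤ ‖T‖ ^ 2 * ‖toEuclideanLin S x‖ ^ 2 := by
        rw [← mul_pow, ← sq]; exact pow_le_pow_left₀ (norm_nonneg x) hT 2
    _ ≤ ‖T‖ ^ 2 * (‖x‖ * (‖D‖ * ‖toEuclideanLin L x‖)) := by
        rw [hS]; exact mul_le_mul_of_nonneg_left hDL (by positivity)
    _ = ‖x‖ * (‖T‖ ^ 2 * ‖D‖ * ‖toEuclideanLin L x‖) := by ring

lemma posSemidef_conjTranspose_mul_self_sub_smul_one_of_norm_le [DecidableEq m]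
    (L : Matrix m n 𝕜) {C : ℝ}
    (h : ∀ x, ‖x‖ ≤ C * ‖toEuclideanLin L x‖) :
    (Lᴴ * L - (((C ^ 2)⁻¹ : ℝ) : 𝕜) • 1).PosSemidef := by
  rw [← isPositive_toEuclideanLin_iff]
  refine ⟨isSymmetric_toEuclideanLin_iff.2 ?_, fun x => ?_⟩
  · exact (isHermitian_conjTranspose_mul_self L).sub
      (isHermitian_one.smul (RCLike.conj_ofReal _))
  have hsq : ‖x‖ ^ 2 ≤ C ^ 2 * ‖toEuclideanLin L x‖ ^ 2 := by
    rw [← mul_pow]; exact pow_le_pow_left₀ (norm_nonneg x) (h x) 2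
  have hquad : (C ^ 2)⁻¹ * ‖x‖ ^ 2 ≤ ‖toEuclideanLin L x‖ ^ 2 := by
    rcases eq_or_ne C 0 with rfl | hC
    · simp
    · rwa [inv_mul_le_iff₀ (by positivity)]
  rw [map_sub, LinearMap.sub_apply, inner_sub_left, map_sub, sub_nonneg,
    inner_re_symm (𝕜 := 𝕜) (toEuclideanLin (Lᴴ * L) x),
    inner_toEuclideanLin_conjTranspose_mul_self, map_smul, toLpLin_one, LinearMap.smul_apply,
    LinearMap.id_apply, inner_smul_left, inner_self_eq_norm_sq_to_K, RCLike.conj_ofReal,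
    ← RCLike.ofReal_pow, ← RCLike.ofReal_pow, ← RCLike.ofReal_mul, RCLike.ofReal_re,
    RCLike.ofReal_re]
  exact hquad

end Matrix

theorem stmt_12_general (d e g : ℕ) (he : 0 < e)
    (A0 : Matrix (Fin d) (Fin e) ℂ) (A : Fin g → Matrix (Fin d) (Fin e) ℂ)
    (D : Matrix (Fin e) (Fin d) ℂ) (R : Matrix (Fin e) (Fin e) ℂ) (hR : IsUnit R)
    (hRe0 : (1 / 2 : ℂ) • (D * A0 + (D * A0)ᴴ) = Rᴴ * R)
    (hRej : ∀ j, (1 / 2 : ℂ) • (D * A j + (D * A j)ᴴ) = 0) :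
    ∃ ε : ℝ, ε = (‖R⁻¹‖ ^ 4)⁻¹ * (‖D‖ ^ 2)⁻¹ ∧ 0 < ε ∧
      ∀ (n : ℕ) (X : Fin g → Matrix (Fin n) (Fin n) ℂ), (∀ j, (X j).IsHermitian) →
        ((A0 ⊗ₖ (1 : Matrix (Fin n) (Fin n) ℂ) + ∑ j, A j ⊗ₖ X j)ᴴ *
            (A0 ⊗ₖ (1 : Matrix (Fin n) (Fin n) ℂ) + ∑ j, A j ⊗ₖ X j) -
          (ε : ℂ) • 1).PosSemidef := by
  have : Nonempty (Fin e) := ⟨⟨0, he⟩⟩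
  have hRinv : R⁻¹ * R = 1 := nonsing_inv_mul R ((isUnit_iff_isUnit_det R).mp hR)
  have hRinv_pos : 0 < ‖R⁻¹‖ := norm_pos_iff.2 (left_ne_zero_of_mul_eq_one hRinv)
  have hD_pos : 0 < ‖D‖ := by
    refine norm_pos_iff.2 fun hD => right_ne_zero_of_mul_eq_one hRinv ?_
    rwa [hD, Matrix.zero_mul, conjTranspose_zero, add_zero, smul_zero, eq_comm,
      conjTranspose_mul_self_eq_zero] at hRe0
  refine ⟨_, rfl, by positivity, fun n X hX => ?_⟩
  have hRe : (1 / 2 : ℂ) • ((D ⊗ₖ (1 : Matrix (Fin n) (Fin n) ℂ)) * pencilEval A0 A X +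
      ((D ⊗ₖ (1 : Matrix (Fin n) (Fin n) ℂ)) * pencilEval A0 A X)ᴴ) =
      (R ⊗ₖ (1 : Matrix (Fin n) (Fin n) ℂ))ᴴ * (R ⊗ₖ 1) := by
    rw [kronecker_one_mul_pencilEval, smul_add_conjTranspose_pencilEval _ _ _ hX, hRe0]
    simp only [hRej, pencilEval, zero_kronecker, Finset.sum_const_zero, add_zero]
    rw [conjTranspose_kronecker, conjTranspose_one, ← mul_kronecker_mul, Matrix.one_mul]
  have hRinv_kron : (R⁻¹ ⊗ₖ (1 : Matrix (Fin n) (Fin n) ℂ)) * (R ⊗ₖ 1) = 1 := by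
    rw [← mul_kronecker_mul, hRinv, Matrix.one_mul, one_kronecker_one]
  have hLower (x : EuclideanSpace ℂ (Fin e × Fin n)) :
      ‖x‖ ≤ (‖R⁻¹‖ ^ 2 * ‖D‖) * ‖toEuclideanLin (pencilEval A0 A X) x‖ := by
    refine (norm_le_of_half_add_conjTranspose_eq_conjTranspose_mul_self _ _ hRinv_kron hRe
      x).trans ?_
    gcongr <;> exact l2_opNorm_kronecker_one_le _
  rw [show (‖R⁻¹‖ ^ 4)⁻¹ * (‖D‖ ^ 2)⁻¹ = ((‖R⁻¹‖ ^ 2 * ‖D‖) ^ 2)⁻¹ by ring]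
  exact posSemidef_conjTranspose_mul_self_sub_smul_one_of_norm_le _ hLower

theorem stmt_12 (d e g : ℕ) (hde : e ≤ d) (he : 0 < e)
    (A0 : Matrix (Fin d) (Fin e) ℂ) (A : Fin g → Matrix (Fin d) (Fin e) ℂ)
    (D : Matrix (Fin e) (Fin d) ℂ) (R : Matrix (Fin e) (Fin e) ℂ) (hR : IsUnit R)
    (hRe0 : (1 / 2 : ℂ) • (D * A0 + (D * A0)ᴴ) = Rᴴ * R)
    (hRej : ∀ j, (1 / 2 : ℂ) • (D * A j + (D * A j)ᴴ) = 0) :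
    ∃ ε : ℝ, ε = (‖R⁻¹‖ ^ 4)⁻¹ * (‖D‖ ^ 2)⁻¹ ∧ 0 < ε ∧
      ∀ (n : ℕ) (X : Fin g → Matrix (Fin n) (Fin n) ℂ), (∀ j, (X j).IsHermitian) →
        ((A0 ⊗ₖ (1 : Matrix (Fin n) (Fin n) ℂ) + ∑ j, A j ⊗ₖ X j)ᴴ *
            (A0 ⊗ₖ (1 : Matrix (Fin n) (Fin n) ℂ) + ∑ j, A j ⊗ₖ X j) -
          (ε : ℂ) • 1).PosSemidef :=
  stmt_12_general d e g he A0 A D R hR hRe0 hRej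
end

section
/- Let $L(x) = A_0 + \sum_{j=1}^g A_j x_j$ with $A_j \in \mathbb{C}^{d \times e}$, $d \geq e$, let $D \in \mathbb{C}^{e \times d}$ satisfy $\mathrm{Re}(DA_j) = 0$ for $j \geq 1$ and $\mathrm{Re}(DA_0) \succeq 0$, and let $V$ be a matrix whose columns form a basis of $\ker \mathrm{Re}(DA_0)$. Fix Hermitian $n \times n$ matrices $X_1, \dots, X_g$. If $(LV)(X) := L(X)(V \otimes I_n)$ is injective, then $L(X)$ is injective. -/
/-! Multiplying `L(X) w = 0` on the left by `D ⊗ I` and taking Hermitian parts gives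
`w* (Re(D A₀) ⊗ I) w = 0`, because `Re(D Aⱼ) = 0` and the `Xⱼ` are Hermitian.
As `Re(D A₀) ⊗ I` is positive semidefinite, `w` lies in its kernel, which is the range
of `V ⊗ I`; so `w = (V ⊗ I) c` with `L(X)(V ⊗ I) c = 0`, and injectivity of `(LV)(X)`
gives `w = 0`. -/

open Matrix Function
open scoped ComplexOrder Kronecker

namespace Matrix

variable {l m n p r : Type*}

section Kronecker

variable {R : Type*} [Semiring R] [Fintype m] [Fintype n] [DecidableEq n]

theorem kronecker_one_mulVec_apply (P : Matrix l m R) (w : m × n → R) (i : l) (t : n) :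
    ((P ⊗ₖ (1 : Matrix n n R)) *ᵥ w) (i, t) = (P *ᵥ fun j => w (j, t)) i := by
  simp [mulVec, dotProduct, Fintype.sum_prod_type, one_apply]

theorem exists_eq_kronecker_one_mulVec_of_ker [Fintype r] {P : Matrix l m R} {V : Matrix m r R}
    (hPV : ∀ v, P *ᵥ v = 0 → ∃ c, v = V *ᵥ c) {w : m × n → R}
    (hw : (P ⊗ₖ (1 : Matrix n n R)) *ᵥ w = 0) :
    ∃ C, w = (V ⊗ₖ (1 : Matrix n n R)) *ᵥ C := by
  have hslice (t : n) : P *ᵥ (fun j => w (j, t)) = 0 := by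
    ext i
    rw [← kronecker_one_mulVec_apply, hw, Pi.zero_apply, Pi.zero_apply]
  choose c hc using fun t => hPV _ (hslice t)
  refine ⟨fun x => c x.2 x.1, funext fun ⟨j, t⟩ => ?_⟩
  rw [kronecker_one_mulVec_apply]
  exact congrFun (hc t) j

end Kronecker

section HermitianPart

/-- The paper's `Re M`. -/
noncomputable def hermitianPart : Matrix n n ℂ →+ Matrix n n ℂ :=
  AddMonoidHom.mk' (fun M => (1 / 2 : ℂ) • (M + Mᴴ)) fun M N => by
    rw [conjTranspose_add, ← smul_add, add_add_add_comm]

theorem hermitianPart_apply (M : Matrix n n ℂ) : hermitianPart M = (1 / 2 : ℂ) • (M + Mᴴ) :=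
  rfl

theorem hermitianPart_kronecker_of_isHermitian (M : Matrix m m ℂ) {X : Matrix n n ℂ}
    (hX : X.IsHermitian) : hermitianPart (M ⊗ₖ X) = hermitianPart M ⊗ₖ X := by
  rw [hermitianPart_apply, hermitianPart_apply, conjTranspose_kronecker, hX.eq, ← add_kronecker,
    smul_kronecker]

variable [Fintype n]

theorem star_dotProduct_hermitianPart_mulVec_eq_zero {N : Matrix n n ℂ} {w : n → ℂ}
    (hw : N *ᵥ w = 0) : star w ⬝ᵥ hermitianPart N *ᵥ w = 0 := by
  have hadj : star w ⬝ᵥ Nᴴ *ᵥ w = 0 := by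
    rw [dotProduct_mulVec, ← star_mulVec, hw, star_zero, zero_dotProduct]
  rw [hermitianPart_apply, smul_mulVec, dotProduct_smul, add_mulVec, dotProduct_add, hw,
    dotProduct_zero, zero_add, hadj, smul_zero]

theorem injective_mulVec_of_hermitianPart_mul [Fintype p] [Fintype r] {L : Matrix p n ℂ}
    (E : Matrix n p ℂ) (W : Matrix n r ℂ) (hpos : (hermitianPart (E * L)).PosSemidef)
    (hker : ∀ v, hermitianPart (E * L) *ᵥ v = 0 → ∃ c, v = W *ᵥ c)
    (hLW : Injective (L * W).mulVec) : Injective L.mulVec := by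
  intro x y hxy
  have hLw : L *ᵥ (x - y) = 0 := by rw [mulVec_sub, hxy, sub_self]
  have hELw : (E * L) *ᵥ (x - y) = 0 := by rw [← mulVec_mulVec, hLw, mulVec_zero]
  have hRe : hermitianPart (E * L) *ᵥ (x - y) = 0 :=
    (hpos.dotProduct_mulVec_zero_iff _).mp (star_dotProduct_hermitianPart_mulVec_eq_zero hELw)
  obtain ⟨c, hc⟩ := hker _ hRe
  have hc0 : c = 0 := hLW (by rw [mulVec_zero, ← mulVec_mulVec, ← hc, hLw])
  rw [← sub_eq_zero, hc, hc0, mulVec_zero]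

end HermitianPart

theorem hermitianPart_kronecker_one_mul_pencil {ι : Type*} [Fintype ι] [Fintype p] [Fintype m]
    [Fintype n] [DecidableEq n]
    (A0 : Matrix p m ℂ) (A : ι → Matrix p m ℂ) (D : Matrix m p ℂ)
    (X : ι → Matrix n n ℂ) (hX : ∀ j, (X j).IsHermitian)
    (hRej : ∀ j, hermitianPart (D * A j) = 0) :
    hermitianPart ((D ⊗ₖ (1 : Matrix n n ℂ)) * (A0 ⊗ₖ (1 : Matrix n n ℂ) + ∑ j, A j ⊗ₖ X j)) =
      hermitianPart (D * A0) ⊗ₖ (1 : Matrix n n ℂ) := by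
  simp only [Matrix.mul_add, Matrix.mul_sum, ← mul_kronecker_mul, Matrix.one_mul, map_add,
    map_sum, hermitianPart_kronecker_of_isHermitian _ isHermitian_one,
    hermitianPart_kronecker_of_isHermitian _ (hX _), hRej, zero_kronecker,
    Finset.sum_const_zero, add_zero]

end Matrix

theorem stmt_13_general (d e g k n : ℕ)
    (A0 : Matrix (Fin d) (Fin e) ℂ) (A : Fin g → Matrix (Fin d) (Fin e) ℂ)
    (D : Matrix (Fin e) (Fin d) ℂ)
    (hRej : ∀ j, (1 / 2 : ℂ) • (D * A j + (D * A j)ᴴ) = 0)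
    (hRe0 : ((1 / 2 : ℂ) • (D * A0 + (D * A0)ᴴ)).PosSemidef)
    (V : Matrix (Fin e) (Fin k) ℂ)
    (hVker : ∀ v : Fin e → ℂ,
      ((1 / 2 : ℂ) • (D * A0 + (D * A0)ᴴ)).mulVec v = 0 ↔ ∃ c : Fin k → ℂ, v = V.mulVec c)
    (X : Fin g → Matrix (Fin n) (Fin n) ℂ) (hX : ∀ j, (X j).IsHermitian)
    (hLV : Function.Injective
      (((A0 ⊗ₖ (1 : Matrix (Fin n) (Fin n) ℂ) + ∑ j, A j ⊗ₖ X j) *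
        (V ⊗ₖ (1 : Matrix (Fin n) (Fin n) ℂ))).mulVec)) :
    Function.Injective ((A0 ⊗ₖ (1 : Matrix (Fin n) (Fin n) ℂ) + ∑ j, A j ⊗ₖ X j)).mulVec := by
  have hRe := hermitianPart_kronecker_one_mul_pencil A0 A D X hX hRej
  refine injective_mulVec_of_hermitianPart_mul (D ⊗ₖ 1) (V ⊗ₖ 1) ?_ ?_ hLV
  · rw [hRe]
    exact hRe0.kronecker PosSemidef.one
  · intro w hw
    rw [hRe] at hw
    exact exists_eq_kronecker_one_mulVec_of_ker (fun v => (hVker v).mp) hw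

theorem stmt_13 (d e g k n : ℕ) (hde : e ≤ d)
    (A0 : Matrix (Fin d) (Fin e) ℂ) (A : Fin g → Matrix (Fin d) (Fin e) ℂ)
    (D : Matrix (Fin e) (Fin d) ℂ)
    (hRej : ∀ j, (1 / 2 : ℂ) • (D * A j + (D * A j)ᴴ) = 0)
    (hRe0 : ((1 / 2 : ℂ) • (D * A0 + (D * A0)ᴴ)).PosSemidef)
    (V : Matrix (Fin e) (Fin k) ℂ)
    -- the columns of `V` are linearly independent and span the kernel of `Re (D * A0)`
    (hVinj : Function.Injective V.mulVec)
    (hVker : ∀ v : Fin e → ℂ,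
      ((1 / 2 : ℂ) • (D * A0 + (D * A0)ᴴ)).mulVec v = 0 ↔ ∃ c : Fin k → ℂ, v = V.mulVec c)
    (X : Fin g → Matrix (Fin n) (Fin n) ℂ) (hX : ∀ j, (X j).IsHermitian)
    (hLV : Function.Injective
      (((A0 ⊗ₖ (1 : Matrix (Fin n) (Fin n) ℂ) + ∑ j, A j ⊗ₖ X j) *
        (V ⊗ₖ (1 : Matrix (Fin n) (Fin n) ℂ))).mulVec)) :
    Function.Injective ((A0 ⊗ₖ (1 : Matrix (Fin n) (Fin n) ℂ) + ∑ j, A j ⊗ₖ X j)).mulVec :=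
  stmt_13_general d e g k n A0 A D hRej hRe0 V hVker X hX hLV
end

section
/- Let $s = c^* L^{-1} b$ where $L$ is an invertible $d \times d$ complex matrix and $b, c \in \mathbb{C}^d$. Then the scalar $\bar{s} s = s^* s$ equals $(0 \;\; b^*) \begin{pmatrix} c c^* & L^* \\ -L & 0 \end{pmatrix}^{-1} \begin{pmatrix} 0 \\ b \end{pmatrix}$, provided the displayed $2d \times 2d$ block matrix is invertible; moreover this block matrix is invertible whenever $L$ is, with real part $\begin{pmatrix} cc^* & 0 \\ 0 & 0\end{pmatrix} \succeq 0$. -/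
open Matrix
open scoped ComplexOrder

/-!
The off-diagonal blocks `Lᴴ` and `-L` are skew-adjoint to each other, so the Hermitian part of
`N` is `cc* ⊕ 0 = (c ⊕ 0)(c ⊕ 0)*`. Since `N` is block anti-triangular with invertible
off-diagonal blocks, its inverse is explicit, with lower-right block `L⁻ᴴ cc* L⁻¹`; the quadratic
form of that block at `b` is `|c* L⁻¹ b|²`.
-/

namespace Matrix

variable {m n α : Type*}

section Blocks

variable [Fintype n] [DecidableEq n] [CommRing α]

theorem fromBlocks_neg_zero₂₂_mul_eq_one {A B C : Matrix n n α} (hB : IsUnit B)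
    (hC : IsUnit C) : fromBlocks A B (-C) 0 * fromBlocks 0 (-C⁻¹) B⁻¹ (B⁻¹ * A * C⁻¹) = 1 := by
  have hBdet := (isUnit_iff_isUnit_det B).mp hB
  have hCdet := (isUnit_iff_isUnit_det C).mp hC
  rw [fromBlocks_multiply, ← fromBlocks_one]
  simp [← Matrix.mul_assoc, mul_nonsing_inv _ hBdet, mul_nonsing_inv _ hCdet]

theorem isUnit_fromBlocks_neg_zero₂₂ {A B C : Matrix n n α} (hB : IsUnit B) (hC : IsUnit C) :
    IsUnit (fromBlocks A B (-C) 0) :=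
  IsUnit.of_mul_eq_one _ (fromBlocks_neg_zero₂₂_mul_eq_one hB hC)

theorem inv_fromBlocks_neg_zero₂₂_of_isUnit {A B C : Matrix n n α} (hB : IsUnit B)
    (hC : IsUnit C) : (fromBlocks A B (-C) 0)⁻¹ = fromBlocks 0 (-C⁻¹) B⁻¹ (B⁻¹ * A * C⁻¹) :=
  inv_eq_right_inv (fromBlocks_neg_zero₂₂_mul_eq_one hB hC)

end Blocks

theorem fromBlocks_add_conjTranspose_of_skew [AddGroup α] [StarAddMonoid α]
    (A : Matrix m m α) (B : Matrix n m α) :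
    fromBlocks A Bᴴ (-B) 0 + (fromBlocks A Bᴴ (-B) 0)ᴴ = fromBlocks (A + Aᴴ) 0 0 0 := by
  rw [fromBlocks_conjTranspose, fromBlocks_add]
  simp

theorem vecMulVec_sumElim_zero [MulZeroClass α] (u v : m → α) :
    vecMulVec (Sum.elim u (0 : n → α)) (Sum.elim v (0 : n → α)) =
      fromBlocks (vecMulVec u v) 0 0 0 := by
  ext (i | i) (j | j) <;> simp [vecMulVec_apply]

theorem star_sumElim_zero_dotProduct_fromBlocks_mulVec [Fintype m] [Fintype n] [Semiring α]
    [StarRing α] (P : Matrix m m α) (Q : Matrix m n α) (R : Matrix n m α) (S : Matrix n n α)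
    (b : n → α) :
    star (Sum.elim (0 : m → α) b) ⬝ᵥ fromBlocks P Q R S *ᵥ Sum.elim 0 b = star b ⬝ᵥ S *ᵥ b := by
  simp [Function.star_sumElim, fromBlocks_mulVec, sumElim_dotProduct_sumElim]

theorem star_dotProduct_conjTranspose_mul_vecMulVec_mul_mulVec [Fintype m] [Fintype n]
    [CommRing α] [StarRing α] (B : Matrix m n α) (b : n → α) (c : m → α) :
    star b ⬝ᵥ (Bᴴ * vecMulVec c (star c) * B) *ᵥ b =
      star (star c ⬝ᵥ B *ᵥ b) * (star c ⬝ᵥ B *ᵥ b) := by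
  rw [← mulVec_mulVec, ← mulVec_mulVec, vecMulVec_mulVec, mulVec_smul, dotProduct_smul,
    mulVec_conjTranspose, dotProduct_star, star_star, ← dotProduct_mulVec, op_smul_eq_mul,
    mul_comm]

end Matrix

theorem stmt_19 (d : ℕ) (b c : Fin d → ℂ) (L : Matrix (Fin d) (Fin d) ℂ) (hL : IsUnit L)
    (s : ℂ) (hs : s = star c ⬝ᵥ L⁻¹.mulVec b)
    (N : Matrix (Fin d ⊕ Fin d) (Fin d ⊕ Fin d) ℂ)
    (hN : N = Matrix.fromBlocks (Matrix.vecMulVec c (star c)) Lᴴ (-L) 0) :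
    IsUnit N ∧
    (1 / 2 : ℂ) • (N + Nᴴ) = Matrix.fromBlocks (Matrix.vecMulVec c (star c)) 0 0 0 ∧
    ((1 / 2 : ℂ) • (N + Nᴴ)).PosSemidef ∧
    star s * s = star (Sum.elim (0 : Fin d → ℂ) b) ⬝ᵥ N⁻¹.mulVec (Sum.elim (0 : Fin d → ℂ) b) := by
  have hLH : IsUnit Lᴴ := (isUnit_conjTranspose L).mpr hL
  have hA : (vecMulVec c (star c))ᴴ = vecMulVec c (star c) :=
    (posSemidef_vecMulVec_self_star c).isHermitian
  have hRe : (1 / 2 : ℂ) • (N + Nᴴ) = fromBlocks (vecMulVec c (star c)) 0 0 0 := by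
    rw [hN, fromBlocks_add_conjTranspose_of_skew, hA, fromBlocks_smul, ← two_smul ℂ, smul_smul]
    norm_num
  refine ⟨hN ▸ isUnit_fromBlocks_neg_zero₂₂ hLH hL, hRe, ?_, ?_⟩
  · have h := posSemidef_vecMulVec_self_star (Sum.elim c (0 : Fin d → ℂ))
    rwa [Function.star_sumElim, star_zero, vecMulVec_sumElim_zero, ← hRe] at h
  · rw [hN, inv_fromBlocks_neg_zero₂₂_of_isUnit hLH hL,
      star_sumElim_zero_dotProduct_fromBlocks_mulVec, ← conjTranspose_nonsing_inv,
      star_dotProduct_conjTranspose_mul_vecMulVec_mul_mulVec, hs]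
end
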